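/- For all α, β > 0 with ω > 0 and Re λ > ω^(1/α), the Laplace transform of t ↦ t^(β-1) E_{α,β}(ω t^α) equals λ^(α-β)/(λ^α - ω), where E_{α,β}(z) = Σ_{n≥0} z^n / Γ(αn + β) is the two-parameter Mittag-Leffler function. -/

import Mathlib

/-! Expanding `E_{α,β}` termwise, the transform becomes a series of Laplace transforms of the
powers `t ^ (αn + β - 1)`, each equal to `Γ(αn + β) / λ ^ (αn + β)`. The Gamma factors cancel
against the coefficients of `E_{α,β}`, leaving the geometric series `∑ ω ^ n / λ ^ (αn + β)`,
which converges because `‖λ‖ ^ α ≥ (Re λ) ^ α > ω`; the same bound at `Re λ` makes the termwise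
integration absolutely convergent. For complex `λ` the transform `Γ(s) / λ ^ s` of `t ^ (s - 1)`
follows from the real case by analytic continuation over the half-plane `Re λ > 0`. -/

open MeasureTheory Real Set

/-- Wright function `W_{l,m}(z) = Σ z^n/(n! Γ(l n + m))`. -/
noncomputable def wright (l m z : ℝ) : ℝ :=
  ∑' n : ℕ, z ^ n / ((n.factorial : ℝ) * Real.Gamma (l * n + m))

/-- Scaled Wright function `ψ_{a,b}(t,s) = t^(b-1) W_{-a,b}(-s t^(-a))`. -/
noncomputable def psiW (a b t s : ℝ) : ℝ :=
  t ^ (b - 1) * wright (-a) b (-(s * t ^ (-a)))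

/-- Riemann-Liouville kernel `g_γ(t) = t^(γ-1)/Γ(γ)`. -/
noncomputable def rlK (γ t : ℝ) : ℝ := t ^ (γ - 1) / Real.Gamma γ

/-- Real two-parameter Mittag-Leffler function. -/
noncomputable def mlR (a b z : ℝ) : ℝ := ∑' n : ℕ, z ^ n / Real.Gamma (a * n + b)

/-- Complex two-parameter Mittag-Leffler function. -/
noncomputable def mlC (a b : ℝ) (z : ℂ) : ℂ :=
  ∑' n : ℕ, z ^ n / Complex.Gamma (a * n + b)

open Filter Topology
open scoped Complex

lemma norm_cexp_neg_mul_mul_rpow (z : ℂ) {t : ℝ} (ht : 0 ≤ t) (a : ℝ) :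
    ‖cexp (-z * t) * ((t ^ a : ℝ) : ℂ)‖ = t ^ a * rexp (-(z.re * t)) := by
  rw [norm_mul, Complex.norm_exp, Complex.norm_real, Real.norm_of_nonneg (rpow_nonneg ht a)]
  simp [mul_comm]

lemma integrableOn_cexp_neg_mul_mul_rpow {s : ℝ} (hs : 0 < s) {z : ℂ} (hz : 0 < z.re) :
    IntegrableOn (fun t : ℝ => cexp (-z * t) * ((t ^ (s - 1) : ℝ) : ℂ)) (Ioi 0) := by
  have hreal : IntegrableOn (fun t : ℝ => t ^ (s - 1) * rexp (-(z.re * t))) (Ioi 0) := by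
    simpa using integrableOn_rpow_mul_exp_neg_mul_rpow (p := 1) (by linarith) one_pos hz
  refine hreal.mono' (by fun_prop) ?_
  filter_upwards [ae_restrict_mem measurableSet_Ioi] with t ht
  exact (norm_cexp_neg_mul_mul_rpow z (le_of_lt ht) _).le

lemma differentiableAt_integral_cexp_neg_mul_mul_rpow {s : ℝ} (hs : 0 < s) {z₀ : ℂ}
    (hz₀ : 0 < z₀.re) :
    DifferentiableAt ℂ
      (fun z : ℂ => ∫ t in Ioi (0 : ℝ), cexp (-z * t) * ((t ^ (s - 1) : ℝ) : ℂ)) z₀ := by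
  set ε := z₀.re / 2
  have hε : 0 < ε := by positivity
  have hdom : {z : ℂ | ε < z.re} ∈ 𝓝 z₀ :=
    (isOpen_lt continuous_const Complex.continuous_re).mem_nhds (by simp [ε]; linarith)
  -- The `z`-derivative of the integrand is minus the integrand for `s + 1`, which on
  -- `{ε < Re z}` is dominated in norm by its (integrable) value at `z = ε`.
  have hF' := integrableOn_cexp_neg_mul_mul_rpow (by linarith : 0 < s + 1) hz₀
  have hbound := integrableOn_cexp_neg_mul_mul_rpow (by linarith : 0 < s + 1)
    (by simpa using hε : 0 < (ε : ℂ).re)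
  refine (hasDerivAt_integral_of_dominated_loc_of_deriv_le (μ := volume.restrict (Ioi 0))
    (F := fun (z : ℂ) (t : ℝ) => cexp (-z * t) * ((t ^ (s - 1) : ℝ) : ℂ))
    (F' := fun (z : ℂ) (t : ℝ) => -(cexp (-z * t) * ((t ^ (s + 1 - 1) : ℝ) : ℂ)))
    hdom (.of_forall fun z => by fun_prop) (integrableOn_cexp_neg_mul_mul_rpow hs hz₀)
    hF'.neg.aestronglyMeasurable ?_ hbound.norm ?_).2.differentiableAt
  · filter_upwards [ae_restrict_mem measurableSet_Ioi] with t (ht : 0 < t) z (hz : ε < z.re)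
    rw [norm_neg, norm_cexp_neg_mul_mul_rpow z ht.le, norm_cexp_neg_mul_mul_rpow _ ht.le]
    gcongr _ * rexp ?_
    simp only [Complex.ofReal_re]
    nlinarith
  · filter_upwards [ae_restrict_mem measurableSet_Ioi] with t (ht : 0 < t) z _
    have hpow : t ^ (s + 1 - 1) = t * t ^ (s - 1) := by
      rw [show s + 1 - 1 = 1 + (s - 1) by ring, rpow_add ht, rpow_one]
    have := (((hasDerivAt_neg z).mul_const (t : ℂ)).cexp).mul_const ((t ^ (s - 1) : ℝ) : ℂ)
    refine this.congr_deriv ?_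
    rw [hpow]
    push_cast
    ring

lemma eqOn_re_pos_of_eq_ofReal {f g : ℂ → ℂ} (hf : DifferentiableOn ℂ f {z | 0 < z.re})
    (hg : DifferentiableOn ℂ g {z | 0 < z.re}) (hfg : ∀ x : ℝ, 0 < x → f x = g x) :
    EqOn f g {z | 0 < z.re} := by
  have hopen : IsOpen {z : ℂ | 0 < z.re} := isOpen_lt continuous_const Complex.continuous_re
  have hreal : ∃ᶠ x : ℝ in 𝓝[≠] 1, f x = g x :=
    ((eventually_gt_nhds one_pos).filter_mono nhdsWithin_le_nhds).frequently.mono hfg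
  have hofReal : Tendsto ((↑) : ℝ → ℂ) (𝓝[≠] 1) (𝓝[≠] 1) :=
    Complex.continuous_ofReal.continuousWithinAt.tendsto_nhdsWithin fun x hx => by simpa using hx
  exact (hf.analyticOnNhd hopen).eqOn_of_preconnected_of_frequently_eq (hg.analyticOnNhd hopen)
    (convex_halfSpace_re_gt 0).isPreconnected (by simp) (hofReal.frequently hreal)

theorem integral_cexp_neg_mul_mul_rpow {s : ℝ} (hs : 0 < s) {z : ℂ} (hz : 0 < z.re) :
    ∫ t in Ioi (0 : ℝ), cexp (-z * t) * ((t ^ (s - 1) : ℝ) : ℂ) = Gamma s / z ^ (s : ℂ) := by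
  refine eqOn_re_pos_of_eq_ofReal (g := fun z => Gamma s / z ^ (s : ℂ))
    (fun z hz => (differentiableAt_integral_cexp_neg_mul_mul_rpow hs hz).differentiableWithinAt)
    (fun z (hz : 0 < z.re) => ?_) (fun r hr => ?_) hz
  · refine (DifferentiableAt.div (differentiableAt_const _) ?_ ?_).differentiableWithinAt
    · exact ((hasDerivAt_id z).cpow_const (Or.inl hz)).differentiableAt
    · exact Complex.cpow_ne_zero_iff.mpr (Or.inl (Complex.ne_zero_of_re_pos hz))
  · have hreal : ∀ t : ℝ, cexp (-r * t) * ((t ^ (s - 1) : ℝ) : ℂ)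
        = ((t ^ (s - 1) * rexp (-(r * t)) : ℝ) : ℂ) := fun t => by push_cast; rw [mul_comm, neg_mul]
    rw [funext hreal, integral_complex_ofReal, integral_rpow_mul_exp_neg_mul_Ioi hs hr, one_div,
      inv_rpow hr.le, ← Complex.ofReal_cpow hr.le]
    push_cast
    ring

theorem integral_cexp_neg_mul_mul_tsum_rpow {c s : ℕ → ℝ} (hs : ∀ n, 0 < s n) {z : ℂ}
    (hz : 0 < z.re) (hsum : Summable fun n => |c n| * Gamma (s n) / z.re ^ s n) :
    ∫ t in Ioi (0 : ℝ), cexp (-z * t) * ((∑' n, c n * t ^ (s n - 1) : ℝ) : ℂ)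
      = ∑' n, c n * Gamma (s n) / z ^ (s n : ℂ) := by
  set F : ℕ → ℝ → ℂ := fun n t => c n * (cexp (-z * t) * ((t ^ (s n - 1) : ℝ) : ℂ))
  have hF_int (n : ℕ) : Integrable (F n) (volume.restrict (Ioi 0)) :=
    (integrableOn_cexp_neg_mul_mul_rpow (hs n) hz).const_mul _
  have hF_norm (n : ℕ) : ∫ t in Ioi (0 : ℝ), ‖F n t‖ = |c n| * Gamma (s n) / z.re ^ s n := by
    rw [setIntegral_congr_fun measurableSet_Ioi fun t (ht : 0 < t) => by
      rw [norm_mul, norm_cexp_neg_mul_mul_rpow z ht.le, Complex.norm_real, Real.norm_eq_abs],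
      integral_const_mul, integral_rpow_mul_exp_neg_mul_Ioi (hs n) hz, one_div, inv_rpow hz.le]
    ring
  calc ∫ t in Ioi (0 : ℝ), cexp (-z * t) * ((∑' n, c n * t ^ (s n - 1) : ℝ) : ℂ)
      = ∫ t in Ioi (0 : ℝ), ∑' n, F n t := by
        congr 1 with t
        rw [Complex.ofReal_tsum, ← tsum_mul_left]
        congr 1 with n
        push_cast
        ring
    _ = ∑' n, ∫ t in Ioi (0 : ℝ), F n t :=
        (integral_tsum_of_summable_integral_norm hF_int (by simpa only [hF_norm])).symm
    _ = ∑' n, c n * Gamma (s n) / z ^ (s n : ℂ) := by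
        congr 1 with n
        rw [integral_const_mul, integral_cexp_neg_mul_mul_rpow (hs n) hz]
        ring

lemma rpow_sub_one_mul_mlR_eq_tsum (a b ω : ℝ) {t : ℝ} (ht : 0 < t) :
    t ^ (b - 1) * mlR a b (ω * t ^ a)
      = ∑' n : ℕ, ω ^ n / Gamma (a * n + b) * t ^ (a * n + b - 1) := by
  rw [mlR, ← tsum_mul_left]
  congr 1 with n
  rw [mul_pow, ← rpow_mul_natCast ht.le, show a * n + b - 1 = b - 1 + a * n by ring,
    rpow_add ht]
  ring

lemma summable_pow_div_rpow_mul_add {x r a : ℝ} (b : ℝ) (hx : 0 ≤ x) (hr : 0 < r)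
    (hxr : x < r ^ a) : Summable fun n : ℕ => x ^ n / r ^ (a * n + b) := by
  have hra : 0 < r ^ a := rpow_pos_of_pos hr a
  refine ((summable_geometric_of_lt_one (div_nonneg hx hra.le)
    ((div_lt_one hra).mpr hxr)).div_const (r ^ b)).congr fun n => ?_
  rw [rpow_add hr, rpow_mul_natCast hr.le, div_pow]
  field_simp

lemma tsum_pow_div_cpow_mul_add {w z : ℂ} {a : ℝ} (b : ℝ) (hz : z ≠ 0)
    (hwz : ‖w‖ < ‖z ^ (a : ℂ)‖) :
    ∑' n : ℕ, w ^ n / z ^ ((a * n + b : ℝ) : ℂ) = z ^ ((a : ℂ) - b) / (z ^ (a : ℂ) - w) := by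
  have hza : z ^ (a : ℂ) ≠ 0 := norm_pos_iff.mp ((norm_nonneg w).trans_lt hwz)
  have hq : ‖w / z ^ (a : ℂ)‖ < 1 := by
    rw [norm_div]
    exact (div_lt_one (norm_pos_iff.mpr hza)).mpr hwz
  have hsub : z ^ (a : ℂ) - w ≠ 0 := fun h => hwz.ne (by rw [sub_eq_zero.mp h])
  calc ∑' n : ℕ, w ^ n / z ^ ((a * n + b : ℝ) : ℂ)
      = ∑' n : ℕ, (w / z ^ (a : ℂ)) ^ n / z ^ (b : ℂ) := by
        congr 1 with n
        rw [Complex.ofReal_add, Complex.ofReal_mul, Complex.ofReal_natCast,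
          Complex.cpow_add _ _ hz, Complex.cpow_mul_nat, div_pow]
        field_simp
    _ = z ^ ((a : ℂ) - b) / (z ^ (a : ℂ) - w) := by
        rw [tsum_div_const, tsum_geometric_of_norm_lt_one hq, Complex.cpow_sub _ _ hz]
        field_simp

/-- Laplace transform of `t^(β-1) E_{α,β}(ω t^α)` equals `λ^(α-β)/(λ^α-ω)`
for `Re λ > ω^(1/α)`. -/
theorem stmt0 (α β ω : ℝ) (hα : 0 < α) (hβ : 0 < β) (hω : 0 < ω)
    (lam : ℂ) (hlam : ω ^ (1 / α) < lam.re) :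
    ∫ t in Set.Ioi (0 : ℝ),
        Complex.exp (-lam * t) * ((t ^ (β - 1) * mlR α β (ω * t ^ α) : ℝ) : ℂ)
      = lam ^ ((α : ℂ) - β) / (lam ^ (α : ℂ) - ω) := by
  have hre : 0 < lam.re := (rpow_pos_of_pos hω _).trans hlam
  have hω_lt : ω < lam.re ^ α := by
    rwa [one_div, rpow_inv_lt_iff_of_pos hω.le hre.le hα] at hlam
  have hω_lt_norm : ‖(ω : ℂ)‖ < ‖lam ^ (α : ℂ)‖ := by
    rw [Complex.norm_real, norm_of_nonneg hω.le, Complex.norm_cpow_real]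
    exact hω_lt.trans_le (rpow_le_rpow hre.le (Complex.re_le_norm lam) hα.le)
  have hs (n : ℕ) : 0 < α * n + β := by positivity
  have hcoef (n : ℕ) : ω ^ n / Gamma (α * n + β) * Gamma (α * n + β) = ω ^ n :=
    div_mul_cancel₀ _ (Gamma_pos_of_pos (hs n)).ne'
  calc _ = ∫ t in Ioi (0 : ℝ), cexp (-lam * t) *
          ((∑' n : ℕ, ω ^ n / Gamma (α * n + β) * t ^ (α * n + β - 1) : ℝ) : ℂ) :=
        setIntegral_congr_fun measurableSet_Ioi fun t ht => by
          rw [rpow_sub_one_mul_mlR_eq_tsum α β ω ht]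
    _ = ∑' n : ℕ, (ω : ℂ) ^ n / lam ^ ((α * n + β : ℝ) : ℂ) := by
        rw [integral_cexp_neg_mul_mul_tsum_rpow hs hre]
        · congr 1 with n
          rw [← Complex.ofReal_mul, hcoef, Complex.ofReal_pow]
        · refine (summable_pow_div_rpow_mul_add β hω.le hre hω_lt).congr fun n => ?_
          rw [abs_of_nonneg (by positivity), hcoef]
    _ = _ := tsum_pow_div_cpow_mul_add β (Complex.ne_zero_of_re_pos hre) hω_lt_norm
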